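/- arXiv:1611.06427 — 8 statements merged into one kernel-verified Lean document; each statement's English description precedes it below -/
import Mathlib

section
/- Let X be a real-valued random variable supported on the interval [−ε, η], where 0 ≤ ε ≤ η, and suppose E[X] = μ. Then for every c ≥ 0, E[√(1 + cX²)] ≤ √(1 + c·η·(ε + |μ|)). -/
open MeasureTheory

/-- Lemma 2.1: Let `X` be a real random variable supported on `[-ε, η]` with
`0 ≤ ε ≤ η` and `E[X] = μ`. Then for every `c ≥ 0`,
`E[√(1 + c X²)] ≤ √(1 + c η (ε + |μ|))`. -/
theorem expectation_sqrt_one_add_sq_le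
    {Ω : Type*} [MeasurableSpace Ω] (P : Measure Ω) [IsProbabilityMeasure P]
    (X : Ω → ℝ) (hX : Measurable X)
    (ε η μ : ℝ) (hε : 0 ≤ ε) (hεη : ε ≤ η)
    (hsupp : ∀ᵐ ω ∂P, X ω ∈ Set.Icc (-ε) η)
    (hmean : ∫ ω, X ω ∂P = μ) :
    ∀ c : ℝ, 0 ≤ c →
      ∫ ω, Real.sqrt (1 + c * X ω ^ 2) ∂P ≤ Real.sqrt (1 + c * η * (ε + |μ|)) := by
  intro c hc
  have hη : 0 ≤ η := hε.trans hεη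
  have habs : 0 ≤ |μ| := abs_nonneg μ
  set s : ℝ := 1 + c * η * (ε + |μ|) with hs_def
  have hs1 : (1:ℝ) ≤ s := by
    have : 0 ≤ c * η * (ε + |μ|) := by positivity
    linarith
  have hs0 : (0:ℝ) < s := lt_of_lt_of_le one_pos hs1
  have hrs : 0 < Real.sqrt s := Real.sqrt_pos.mpr hs0
  have hXb : ∀ᵐ ω ∂P, |X ω| ≤ η :=
    hsupp.mono fun ω h => abs_le.mpr ⟨(neg_le_neg hεη).trans h.1, h.2⟩
  have hXm : AEStronglyMeasurable X P := hX.aestronglyMeasurable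
  have hiX : Integrable X P := by
    refine (integrable_const η).mono' hXm ?_
    simpa using hXb
  have hiX2 : Integrable (fun ω => X ω ^ 2) P := by
    refine (integrable_const (η ^ 2)).mono' (hX.pow_const 2).aestronglyMeasurable ?_
    filter_upwards [hXb] with ω h
    rw [Real.norm_eq_abs, abs_of_nonneg (sq_nonneg _)]
    nlinarith [sq_abs (X ω), abs_nonneg (X ω)]
  have hI2 : ∫ ω, X ω ^ 2 ∂P ≤ η * (ε + |μ|) := by
    have h1 : ∫ ω, X ω ^ 2 ∂P ≤ ∫ ω, (η * ε + (η - ε) * X ω) ∂P := by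
      refine integral_mono_ae hiX2 ((integrable_const (η * ε)).add (hiX.const_mul _)) ?_
      filter_upwards [hsupp] with ω h
      nlinarith [h.1, h.2]
    have h2 : ∫ ω, (η * ε + (η - ε) * X ω) ∂P = η * ε + (η - ε) * μ := by
      rw [integral_add (integrable_const _) (hiX.const_mul _), integral_const,
        integral_const_mul, hmean]
      simp
    rw [h2] at h1
    nlinarith [le_abs_self μ]
  have hiF : Integrable (fun ω => Real.sqrt (1 + c * X ω ^ 2)) P := by
    refine (integrable_const (Real.sqrt (1 + c * η ^ 2))).mono'
      ((measurable_const.add ((hX.pow_const 2).const_mul c)).sqrt).aestronglyMeasurable ?_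
    filter_upwards [hXb] with ω h
    rw [Real.norm_eq_abs, abs_of_nonneg (Real.sqrt_nonneg _)]
    apply Real.sqrt_le_sqrt
    have hx2 : X ω ^ 2 ≤ η ^ 2 := by nlinarith [sq_abs (X ω), abs_nonneg (X ω)]
    nlinarith
  have key : ∫ ω, Real.sqrt (1 + c * X ω ^ 2) ∂P
      ≤ ∫ ω, (1 + c * X ω ^ 2 + s) / (2 * Real.sqrt s) ∂P := by
    refine integral_mono_ae hiF
      ((((integrable_const (1:ℝ)).add (hiX2.const_mul c)).add (integrable_const s)).div_const _) ?_
    filter_upwards with ω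
    have ht : (0:ℝ) ≤ 1 + c * X ω ^ 2 := by positivity
    rw [le_div_iff₀ (by positivity)]
    nlinarith [sq_nonneg (Real.sqrt (1 + c * X ω ^ 2) - Real.sqrt s),
      Real.sq_sqrt ht, Real.sq_sqrt hs0.le, Real.sqrt_nonneg (1 + c * X ω ^ 2), hrs]
  have hval : ∫ ω, (1 + c * X ω ^ 2 + s) / (2 * Real.sqrt s) ∂P
      = (1 + c * (∫ ω, X ω ^ 2 ∂P) + s) / (2 * Real.sqrt s) := by
    have hfe : (fun ω => (1 + c * X ω ^ 2 + s) / (2 * Real.sqrt s))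
        = fun ω => ((1 + s) + c * X ω ^ 2) / (2 * Real.sqrt s) := by
      funext ω; ring
    rw [hfe, integral_div, integral_add (integrable_const ((1:ℝ) + s)) (hiX2.const_mul c),
      integral_const, integral_const_mul]
    simp
    ring
  rw [hval] at key
  refine key.trans ?_
  rw [div_le_iff₀ (by positivity)]
  have hsq : Real.sqrt s * (2 * Real.sqrt s) = 2 * s := by
    rw [mul_comm (Real.sqrt s), mul_assoc, Real.mul_self_sqrt hs0.le]
  rw [hsq]
  have : c * (∫ ω, X ω ^ 2 ∂P) ≤ c * (η * (ε + |μ|)) :=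
    mul_le_mul_of_nonneg_left hI2 hc
  nlinarith
end

section
/- Let A ∈ ℝ^{m×n} have nonzero columns a_1,…,a_n and rank r = rk(A). Let 0 < ε ≤ 1/(11r) and let v ∈ ℝ^m with ‖v‖ = 1 satisfy â_jᵀv ≥ −ε for all j ∈ [n]. Let T = I_m + vvᵀ and A' = TA. Then T·P_A ⊆ (1+3ε)·P_{A'}, i.e. for every z ∈ P_A one has Tz ∈ (1+3ε)P_{A'}. -/
open Matrix Set MeasureTheory Pointwise ENNReal

noncomputable section

/-- Euclidean dot product on `Fin d → ℝ`. -/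
def dotp {d : ℕ} (u v : Fin d → ℝ) : ℝ := ∑ i, u i * v i

/-- Euclidean norm on `Fin d → ℝ`. -/
def norm2 {d : ℕ} (v : Fin d → ℝ) : ℝ := Real.sqrt (∑ i, v i ^ 2)

/-- Normalization `v / ‖v‖`, with the convention that `0` is mapped to `0`. -/
def nml {d : ℕ} (v : Fin d → ℝ) : Fin d → ℝ := (norm2 v)⁻¹ • v

/-- The `j`-th column of a matrix. -/
def mcol {d : ℕ} {ι : Type} (A : Matrix (Fin d) ι ℝ) (j : ι) : Fin d → ℝ := fun i => A i j

/-- Goffin's condition measure `ρ_A = max_{y ∈ im(A) \ {0}} min_j â_jᵀ ŷ`. -/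
def goffin {d : ℕ} {ι : Type} [Fintype ι] (A : Matrix (Fin d) ι ℝ) : ℝ :=
  sSup { r : ℝ | ∃ y : Fin d → ℝ, (∃ x : ι → ℝ, A.mulVec x = y) ∧ y ≠ 0 ∧
    r = ⨅ j : ι, dotp (nml (mcol A j)) (nml y) }

/-- The cone `Σ_A = {y : Aᵀ y ≥ 0}`. -/
def SigmaCone {d : ℕ} {ι : Type} (A : Matrix (Fin d) ι ℝ) : Set (Fin d → ℝ) :=
  { y | ∀ j, 0 ≤ dotp (mcol A j) y }

/-- `F_A = Σ_A ∩ B^d`. -/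
def FA {d : ℕ} {ι : Type} (A : Matrix (Fin d) ι ℝ) : Set (Fin d → ℝ) :=
  SigmaCone A ∩ { z | norm2 z ≤ 1 }

/-- `‖v‖_M = √(vᵀ M v)`. -/
def qnorm {d : ℕ} (M : Matrix (Fin d) (Fin d) ℝ) (v : Fin d → ℝ) : ℝ :=
  Real.sqrt (dotp v (M.mulVec v))

/-- The ellipsoid `E(M) = {z : ‖z‖_M ≤ 1}`. -/
def ell {d : ℕ} (M : Matrix (Fin d) (Fin d) ℝ) : Set (Fin d → ℝ) :=
  { z | qnorm M z ≤ 1 }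

/-- The width of a set `X` along `a`: `sup {aᵀz : z ∈ X}`. -/
def widthOf {d : ℕ} (X : Set (Fin d → ℝ)) (a : Fin d → ℝ) : ℝ :=
  sSup { r : ℝ | ∃ z ∈ X, r = dotp a z }

/-- `P_A = conv(â_1,…,â_n) ∩ (−conv(â_1,…,â_n))`. -/
def PA {d : ℕ} {ι : Type} (A : Matrix (Fin d) ι ℝ) : Set (Fin d → ℝ) :=
  convexHull ℝ (Set.range fun j => nml (mcol A j)) ∩
    (-(convexHull ℝ (Set.range fun j => nml (mcol A j))))

/-- `Δ_A`: maximum of `∏_{j ∈ B} ‖a_j‖` over sets `B` of linearly independent columns. -/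
def DeltaA {d n : ℕ} (A : Matrix (Fin d) (Fin n) ℝ) : ℝ :=
  sSup { p : ℝ | ∃ B : Finset (Fin n),
    LinearIndependent ℝ (fun j : {x // x ∈ B} => mcol A j.1) ∧ p = ∏ j ∈ B, norm2 (mcol A j) }

/-- `T*_A`: indices `i` such that some `y` with `Aᵀy ≥ 0` has `a_iᵀ y > 0`. -/
def TstarA {d : ℕ} {ι : Type} (A : Matrix (Fin d) ι ℝ) : Set ι :=
  { i | ∃ y : Fin d → ℝ, (∀ j, 0 ≤ dotp (mcol A j) y) ∧ 0 < dotp (mcol A i) y }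

/-- `S*_A`: indices `i` such that some `x ≥ 0` with `Ax = 0` has `x_i > 0`. -/
def SstarA {d : ℕ} {ι : Type} [Fintype ι] (A : Matrix (Fin d) ι ℝ) : Set ι :=
  { i | ∃ x : ι → ℝ, (∀ j, 0 ≤ x j) ∧ A.mulVec x = 0 ∧ 0 < x i }

/-- `ω_A = min_{i ∈ T*_A} width_{F_A}(â_i)`. -/
def omegaA {d : ℕ} {ι : Type} (A : Matrix (Fin d) ι ℝ) : ℝ :=
  sInf ((fun i => widthOf (FA A) (nml (mcol A i))) '' TstarA A)

/-!
Put `T = I + vvᵀ` and `tⱼ = vᵀâⱼ`. Then `T âⱼ = cⱼ â'ⱼ` with `cⱼ = ‖T âⱼ‖ = √(1 + 3tⱼ²)`, and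
`1 ≤ cⱼ ≤ 1 + tⱼ + 2ε` because `-ε ≤ tⱼ ≤ 1`. Hence for a convex combination `y = ∑ λⱼ âⱼ` the
image `Ty = ∑ λⱼ cⱼ â'ⱼ` lies in `s · conv(â')` with `1 ≤ s ≤ 1 + vᵀy + 2ε`. For `z ∈ P_A` both
`z` and `-z` lie in `conv(â)`, where `vᵀ ≥ -ε`, so `|vᵀz| ≤ ε` and `s ≤ 1 + 3ε`; moreover
`0 = (z + (-z))/2` lies in `conv(â)`, hence `0 ∈ conv(â')`, which lets us enlarge `s` to `1 + 3ε`.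
-/

section Norm2

variable {d : ℕ}

lemma dotp_eq_dotProduct (u v : Fin d → ℝ) : dotp u v = u ⬝ᵥ v := rfl

lemma dotp_comm (u v : Fin d → ℝ) : dotp u v = dotp v u := dotProduct_comm u v

lemma dotp_neg_left (u v : Fin d → ℝ) : dotp (-u) v = -dotp u v := neg_dotProduct u v

lemma dotp_neg_right (u v : Fin d → ℝ) : dotp u (-v) = -dotp u v := dotProduct_neg u v

lemma sq_norm2 (v : Fin d → ℝ) : norm2 v ^ 2 = v ⬝ᵥ v := by
  rw [norm2, Real.sq_sqrt (by positivity)]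
  simp only [dotProduct, sq]

lemma norm2_nonneg (v : Fin d → ℝ) : 0 ≤ norm2 v := Real.sqrt_nonneg _

lemma norm2_eq_zero {v : Fin d → ℝ} : norm2 v = 0 ↔ v = 0 := by
  rw [norm2, Real.sqrt_eq_zero (by positivity),
    Finset.sum_eq_zero_iff_of_nonneg fun i _ => sq_nonneg (v i)]
  simp [funext_iff]

lemma norm2_pos {v : Fin d → ℝ} (hv : v ≠ 0) : 0 < norm2 v :=
  (norm2_nonneg v).lt_of_ne' (norm2_eq_zero.not.2 hv)

lemma norm2_smul (c : ℝ) (v : Fin d → ℝ) : norm2 (c • v) = |c| * norm2 v := by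
  simp only [norm2, Pi.smul_apply, smul_eq_mul, mul_pow, ← Finset.mul_sum]
  rw [Real.sqrt_mul (sq_nonneg c), Real.sqrt_sq_eq_abs]

lemma norm2_neg (v : Fin d → ℝ) : norm2 (-v) = norm2 v := by
  rw [← neg_one_smul ℝ v, norm2_smul, abs_neg, abs_one, one_mul]

lemma abs_dotp_le (u v : Fin d → ℝ) : |dotp u v| ≤ norm2 u * norm2 v := by
  have cauchy_schwarz (u : Fin d → ℝ) : dotp u v ≤ norm2 u * norm2 v :=
    Real.sum_mul_le_sqrt_mul_sqrt _ _ _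
  have := cauchy_schwarz (-u)
  rw [norm2_neg, dotp_neg_left] at this
  exact abs_le.2 ⟨by linarith, cauchy_schwarz u⟩

lemma norm2_smul_nml (v : Fin d → ℝ) : norm2 v • nml v = v := by
  rcases eq_or_ne v 0 with rfl | hv
  · simp [nml]
  · rw [nml, smul_smul, mul_inv_cancel₀ (norm2_pos hv).ne', one_smul]

lemma norm2_nml {v : Fin d → ℝ} (hv : v ≠ 0) : norm2 (nml v) = 1 := by
  rw [nml, norm2_smul, abs_inv, abs_of_pos (norm2_pos hv), inv_mul_cancel₀ (norm2_pos hv).ne']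

lemma nml_smul_of_pos {c : ℝ} (hc : 0 < c) (v : Fin d → ℝ) : nml (c • v) = nml v := by
  rw [nml, nml, norm2_smul, abs_of_pos hc, smul_smul, mul_inv, mul_comm c⁻¹, mul_assoc,
    inv_mul_cancel₀ hc.ne', mul_one]

lemma mulVec_nml {k : ℕ} (M : Matrix (Fin k) (Fin d) ℝ) (a : Fin d → ℝ) :
    M *ᵥ nml a = norm2 (M *ᵥ nml a) • nml (M *ᵥ a) := by
  rcases eq_or_ne a 0 with rfl | ha
  · simp [nml]
  · have : M *ᵥ a = norm2 a • M *ᵥ nml a := by rw [← mulVec_smul, norm2_smul_nml]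
    rw [this, nml_smul_of_pos (norm2_pos ha), norm2_smul_nml]

lemma mcol_mul {k : ℕ} {ι : Type} (M : Matrix (Fin k) (Fin d) ℝ)
    (A : Matrix (Fin d) ι ℝ) (j : ι) : mcol (M * A) j = M *ᵥ mcol A j := by
  funext i
  simp [mcol, mul_apply, mulVec, dotProduct]

lemma le_dotp_of_mem_convexHull {s : Set (Fin d → ℝ)} {v y : Fin d → ℝ} {r : ℝ}
    (h : ∀ x ∈ s, r ≤ dotp v x) (hy : y ∈ convexHull ℝ s) : r ≤ dotp v y :=
  convexHull_min h (convex_halfSpace_ge ⟨dotProduct_add v, fun c x => dotProduct_smul c v x⟩ r) hy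

end Norm2

section RankOneUpdate

variable {d : ℕ} {v : Fin d → ℝ}

lemma one_add_vecMulVec_mulVec (z : Fin d → ℝ) :
    (1 + vecMulVec v v) *ᵥ z = z + dotp v z • v := by
  rw [add_mulVec, one_mulVec, vecMulVec_mulVec, op_smul_eq_smul, dotp_eq_dotProduct]

lemma sq_norm2_one_add_vecMulVec_mulVec (hv : norm2 v = 1) (u : Fin d → ℝ) :
    norm2 ((1 + vecMulVec v v) *ᵥ u) ^ 2 = norm2 u ^ 2 + 3 * dotp v u ^ 2 := by
  have hvv : v ⬝ᵥ v = 1 := by rw [← sq_norm2, hv, one_pow]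
  rw [one_add_vecMulVec_mulVec, sq_norm2, sq_norm2, dotp_eq_dotProduct]
  simp only [add_dotProduct, dotProduct_add, smul_dotProduct, dotProduct_smul, smul_eq_mul, hvv,
    dotProduct_comm u v]
  ring

lemma one_add_three_mul_sq_le {t ε : ℝ} (hε : 0 ≤ ε) (htε : -ε ≤ t) (ht : |t| ≤ 1) :
    1 + 3 * t ^ 2 ≤ (1 + t + 2 * ε) ^ 2 := by
  obtain ⟨ht₁, ht₂⟩ := abs_le.1 ht
  -- the difference is `2 ((t + ε)(1 - t) + ε (1 + t) + 2ε (t + ε))`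
  nlinarith [mul_nonneg (neg_le_iff_add_nonneg.1 htε) (sub_nonneg.2 ht₂),
    mul_nonneg hε (neg_le_iff_add_nonneg'.1 ht₁), mul_nonneg hε (neg_le_iff_add_nonneg.1 htε)]

lemma one_le_norm2_one_add_vecMulVec_mulVec (hv : norm2 v = 1) {u : Fin d → ℝ}
    (hu : norm2 u = 1) : 1 ≤ norm2 ((1 + vecMulVec v v) *ᵥ u) := by
  refine (pow_le_pow_iff_left₀ zero_le_one (norm2_nonneg _) two_ne_zero).1 ?_
  rw [sq_norm2_one_add_vecMulVec_mulVec hv, hu]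
  nlinarith [sq_nonneg (dotp v u)]

lemma norm2_one_add_vecMulVec_mulVec_le (hv : norm2 v = 1) {u : Fin d → ℝ} (hu : norm2 u = 1)
    {ε : ℝ} (hε : 0 ≤ ε) (huv : -ε ≤ dotp v u) :
    norm2 ((1 + vecMulVec v v) *ᵥ u) ≤ 1 + dotp v u + 2 * ε := by
  have hvu : |dotp v u| ≤ 1 := by simpa [hv, hu] using abs_dotp_le v u
  refine (pow_le_pow_iff_left₀ (norm2_nonneg _) (by linarith [(abs_le.1 hvu).1]) two_ne_zero).1 ?_
  rw [sq_norm2_one_add_vecMulVec_mulVec hv, hu, one_pow]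
  exact one_add_three_mul_sq_le hε huv hvu

end RankOneUpdate

section Convex

variable {ι E F : Type*} [Fintype ι] [AddCommGroup E] [Module ℝ E] [AddCommGroup F] [Module ℝ F]

lemma convexHull_range_eq_image_stdSimplex (u : ι → E) :
    convexHull ℝ (range u) = Fintype.linearCombination ℝ u '' stdSimplex ℝ ι := by
  classical
  rw [← convexHull_basis_eq_stdSimplex, LinearMap.image_convexHull, ← range_comp]
  congr
  funext i
  simp [Fintype.linearCombination_apply]

lemma map_sum_smul_mem_smul_convexHull (f : E →ₗ[ℝ] F) {u : ι → E} {u' : ι → F} {c w : ι → ℝ}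
    (hfu : ∀ i, f (u i) = c i • u' i) (hw : ∀ i, 0 ≤ w i) (hc : ∀ i, 0 ≤ c i)
    (hS : 0 < ∑ i, w i * c i) :
    f (∑ i, w i • u i) ∈ (∑ i, w i * c i) • convexHull ℝ (range u') := by
  have hcm : f (∑ i, w i • u i)
      = (∑ i, w i * c i) • Finset.univ.centerMass (fun i => w i * c i) u' := by
    rw [Finset.centerMass, smul_smul, mul_inv_cancel₀ hS.ne', one_smul, map_sum]
    simp only [map_smul, hfu, smul_smul]
  rw [hcm]
  exact smul_mem_smul_set <| Finset.univ.centerMass_mem_convexHull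
    (fun i _ => mul_nonneg (hw i) (hc i)) hS fun i _ => mem_range_self i

lemma StarConvex.smul_set_subset_smul_set_of_le {K : Set E} (hK : StarConvex ℝ 0 K) {s r : ℝ}
    (hs : 0 < s) (hsr : s ≤ r) : s • K ⊆ r • K := by
  rintro _ ⟨x, hx, rfl⟩
  obtain ⟨y, hy, rfl⟩ := hK.mem_smul hx ((one_le_div hs).2 hsr)
  exact ⟨y, hy, show r • y = s • (r / s) • y by rw [smul_smul, mul_div_cancel₀ _ hs.ne']⟩

end Convex

section Rescaling

variable {m n : ℕ} {A : Matrix (Fin m) (Fin n) ℝ} {v : Fin m → ℝ} {ε : ℝ}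

lemma abs_dotp_le_of_mem_PA (hang : ∀ j, -ε ≤ dotp (nml (mcol A j)) v) {z : Fin m → ℝ}
    (hz : z ∈ PA A) : |dotp v z| ≤ ε := by
  have hlow : ∀ y ∈ convexHull ℝ (range fun j => nml (mcol A j)), -ε ≤ dotp v y :=
    fun y => le_dotp_of_mem_convexHull <| forall_mem_range.2 fun j => dotp_comm v _ ▸ hang j
  have hvnz := hlow (-z) (mem_neg.1 hz.2)
  rw [dotp_neg_right] at hvnz
  exact abs_le.2 ⟨hlow z hz.1, by linarith⟩

lemma exists_mulVec_mem_smul_convexHull (hcols : ∀ j, mcol A j ≠ 0) (hv : norm2 v = 1)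
    (hε : 0 ≤ ε) (hang : ∀ j, -ε ≤ dotp (nml (mcol A j)) v) {y : Fin m → ℝ}
    (hy : y ∈ convexHull ℝ (range fun j => nml (mcol A j))) :
    ∃ s, 1 ≤ s ∧ s ≤ 1 + dotp v y + 2 * ε ∧ (1 + vecMulVec v v) *ᵥ y ∈
      s • convexHull ℝ (range fun j => nml (mcol ((1 + vecMulVec v v) * A) j)) := by
  set T := 1 + vecMulVec v v
  set c := fun j => norm2 (T *ᵥ nml (mcol A j))
  rw [convexHull_range_eq_image_stdSimplex] at hy
  obtain ⟨w, ⟨hw0, hw1⟩, rfl⟩ := hy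
  rw [Fintype.linearCombination_apply]
  have hS1 : 1 ≤ ∑ j, w j * c j := calc
    1 = ∑ j, w j * 1 := by simp [hw1]
    _ ≤ ∑ j, w j * c j := Finset.sum_le_sum fun j _ => mul_le_mul_of_nonneg_left
      (one_le_norm2_one_add_vecMulVec_mulVec hv (norm2_nml (hcols j))) (hw0 j)
  refine ⟨∑ j, w j * c j, hS1, ?_, ?_⟩
  · calc ∑ j, w j * c j ≤ ∑ j, w j * (1 + dotp v (nml (mcol A j)) + 2 * ε) :=
          Finset.sum_le_sum fun j _ => mul_le_mul_of_nonneg_left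
            (norm2_one_add_vecMulVec_mulVec_le hv (norm2_nml (hcols j)) hε
              (dotp_comm v _ ▸ hang j)) (hw0 j)
      _ = 1 + dotp v (∑ j, w j • nml (mcol A j)) + 2 * ε := by
          simp only [mul_add, Finset.sum_add_distrib, ← Finset.sum_mul, hw1, dotp_eq_dotProduct,
            dotProduct_sum, dotProduct_smul, smul_eq_mul]
          ring
  · refine map_sum_smul_mem_smul_convexHull T.mulVecLin (fun j => ?_) hw0
      (fun j => norm2_nonneg _) (by linarith)
    rw [mulVecLin_apply, mulVec_nml, mcol_mul]

lemma zero_mem_convexHull_of_mem_PA (hcols : ∀ j, mcol A j ≠ 0) (hv : norm2 v = 1)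
    (hang : ∀ j, -ε ≤ dotp (nml (mcol A j)) v) {z : Fin m → ℝ} (hz : z ∈ PA A) :
    0 ∈ convexHull ℝ (range fun j => nml (mcol ((1 + vecMulVec v v) * A) j)) := by
  have hε : 0 ≤ ε := (abs_nonneg _).trans (abs_dotp_le_of_mem_PA hang hz)
  have hmid := convex_convexHull ℝ _ hz.1 (mem_neg.1 hz.2) (by norm_num : (0 : ℝ) ≤ 1 / 2)
    (by norm_num : (0 : ℝ) ≤ 1 / 2) (by norm_num)
  rw [smul_neg, add_neg_cancel] at hmid
  obtain ⟨s, hs1, -, hs⟩ := exists_mulVec_mem_smul_convexHull hcols hv hε hang hmid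
  rwa [mulVec_zero, zero_mem_smul_set_iff (by linarith)] at hs

lemma mulVec_mem_smul_convexHull (hcols : ∀ j, mcol A j ≠ 0) (hv : norm2 v = 1)
    (hε : 0 ≤ ε) (hang : ∀ j, -ε ≤ dotp (nml (mcol A j)) v)
    (h0 : 0 ∈ convexHull ℝ (range fun j => nml (mcol ((1 + vecMulVec v v) * A) j)))
    {y : Fin m → ℝ} (hy : y ∈ convexHull ℝ (range fun j => nml (mcol A j)))
    (hyε : dotp v y ≤ ε) : (1 + vecMulVec v v) *ᵥ y ∈
      (1 + 3 * ε) • convexHull ℝ (range fun j => nml (mcol ((1 + vecMulVec v v) * A) j)) := by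
  obtain ⟨s, hs1, hs, hTy⟩ := exists_mulVec_mem_smul_convexHull hcols hv hε hang hy
  exact ((convex_convexHull ℝ _).starConvex h0).smul_set_subset_smul_set_of_le
    (by linarith) (by linarith) hTy

end Rescaling

theorem rescale_PA_subset_general
    {m n : ℕ} (A : Matrix (Fin m) (Fin n) ℝ) (hcols : ∀ j, mcol A j ≠ 0)
    (ε : ℝ)
    (v : Fin m → ℝ) (hv : norm2 v = 1)
    (hang : ∀ j, -ε ≤ dotp (nml (mcol A j)) v) :
    ∀ z ∈ PA A,
      (1 + vecMulVec v v).mulVec z ∈ (1 + 3 * ε) • PA ((1 + vecMulVec v v) * A) := by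
  intro z hz
  have hvz := abs_dotp_le_of_mem_PA hang hz
  have hε : 0 ≤ ε := (abs_nonneg _).trans hvz
  have h0 := zero_mem_convexHull_of_mem_PA hcols hv hang hz
  rw [PA, smul_set_inter₀ (by linarith), smul_set_neg]
  refine ⟨mulVec_mem_smul_convexHull hcols hv hε hang h0 hz.1 (abs_le.1 hvz).2, ?_⟩
  rw [mem_neg, ← mulVec_neg]
  exact mulVec_mem_smul_convexHull hcols hv hε hang h0 (mem_neg.1 hz.2)
    (by rw [dotp_neg_right]; linarith [(abs_le.1 hvz).1])

/-- Lemma 2.2(i): for `0 < ε ≤ 1/(11 rk(A))`, a unit vector `v` with `â_jᵀ v ≥ -ε` for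
all `j`, and `T = I + vvᵀ`, `A' = TA`, one has `T·P_A ⊆ (1+3ε)·P_{A'}`. -/
theorem rescale_PA_subset
    {m n : ℕ} (A : Matrix (Fin m) (Fin n) ℝ) (hcols : ∀ j, mcol A j ≠ 0)
    (ε : ℝ) (hε : 0 < ε) (hεr : ε ≤ 1 / (11 * (A.rank : ℝ)))
    (v : Fin m → ℝ) (hv : norm2 v = 1)
    (hang : ∀ j, -ε ≤ dotp (nml (mcol A j)) v) :
    ∀ z ∈ PA A,
      (1 + vecMulVec v v).mulVec z ∈ (1 + 3 * ε) • PA ((1 + vecMulVec v v) * A) :=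
  rescale_PA_subset_general A hcols ε v hv hang
end
end

section
/- Let A ∈ ℝ^{m×n} have nonzero columns a_1,…,a_n, let R ∈ ℝ^{m×m} be symmetric positive definite, Q = R⁻¹, and ε > 0. Suppose F_A ⊆ E(R). Let x ∈ ℝ^n with x ≥ 0 and Σ_{i=1}^n x_i = 1, and suppose y = Σ_{i=1}^n x_i a_i/‖a_i‖_Q satisfies ‖y‖_Q ≤ ε. Define R' = (1/(1+ε))·(R + Σ_{i=1}^n (x_i/‖a_i‖_Q²)·a_i a_iᵀ). Then F_A ⊆ E(R'). -/
/-!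
Let `z ∈ F_A`, so `zᵀRz ≤ 1`. By Cauchy–Schwarz for the dual pair of norms `‖·‖_Q`, `‖·‖_R`,
every `cᵢ = aᵢᵀz` lies in `[0, ‖aᵢ‖_Q]` and `yᵀz ≤ ‖y‖_Q ≤ ε`. Since `cᵢ/‖aᵢ‖_Q ≤ 1`, the new
rank-one terms contribute `∑ xᵢ (cᵢ/‖aᵢ‖_Q)² ≤ ∑ xᵢ cᵢ/‖aᵢ‖_Q = yᵀz ≤ ε`, hence
`zᵀR'z ≤ (1 + ε)/(1 + ε) = 1`.
-/

open Matrix Set MeasureTheory Pointwise ENNReal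

noncomputable section

namespace Matrix

variable {d : ℕ} {R : Matrix (Fin d) (Fin d) ℝ}

theorem PosSemidef.dotProduct_mulVec_sq_le (hR : R.PosSemidef) (u v : Fin d → ℝ) :
    (u ⬝ᵥ R *ᵥ v) ^ 2 ≤ (u ⬝ᵥ R *ᵥ u) * (v ⬝ᵥ R *ᵥ v) := by
  let := R.toSeminormedAddCommGroup hR
  let := R.toInnerProductSpace hR
  have inner_eq (x y : Fin d → ℝ) : (inner ℝ x y : ℝ) = x ⬝ᵥ R *ᵥ y := by
    change (R *ᵥ y) ⬝ᵥ star x = _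
    simp [dotProduct_comm]
  simpa only [sq, inner_eq] using real_inner_mul_inner_self_le u v

/-- Substituting `u = R⁻¹ a` in the Cauchy–Schwarz inequality for the form of `R`. -/
theorem PosDef.dotProduct_sq_le (hR : R.PosDef) (a z : Fin d → ℝ) :
    (a ⬝ᵥ z) ^ 2 ≤ (a ⬝ᵥ R⁻¹ *ᵥ a) * (z ⬝ᵥ R *ᵥ z) := by
  have hunit : IsUnit R.det := isUnit_iff_ne_zero.mpr hR.det_pos.ne'
  have hsymm : Rᵀ = R := by
    simpa [conjTranspose_eq_transpose_of_trivial] using hR.isHermitian.eq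
  have hRa (w : Fin d → ℝ) : (R⁻¹ *ᵥ a) ⬝ᵥ R *ᵥ w = a ⬝ᵥ w := by
    rw [dotProduct_mulVec, ← mulVec_transpose, hsymm, mulVec_mulVec, mul_nonsing_inv _ hunit,
      one_mulVec]
  have h := hR.posSemidef.dotProduct_mulVec_sq_le (R⁻¹ *ᵥ a) z
  rwa [hRa, hRa] at h

theorem PosDef.dotProduct_le_qnorm_inv_mul_qnorm (hR : R.PosDef) (a z : Fin d → ℝ) :
    a ⬝ᵥ z ≤ qnorm R⁻¹ a * qnorm R z := by
  have ha : 0 ≤ a ⬝ᵥ R⁻¹ *ᵥ a := by simpa using hR.inv.posSemidef.dotProduct_mulVec_nonneg a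
  calc a ⬝ᵥ z ≤ |a ⬝ᵥ z| := le_abs_self _
    _ ≤ √((a ⬝ᵥ R⁻¹ *ᵥ a) * (z ⬝ᵥ R *ᵥ z)) := Real.abs_le_sqrt (hR.dotProduct_sq_le a z)
    _ = qnorm R⁻¹ a * qnorm R z := Real.sqrt_mul ha _

end Matrix

theorem mem_ell_iff {d : ℕ} {M : Matrix (Fin d) (Fin d) ℝ} {z : Fin d → ℝ} :
    z ∈ ell M ↔ z ⬝ᵥ M *ᵥ z ≤ 1 :=
  Real.sqrt_le_one

theorem dotProduct_add_sum_smul_vecMulVec_mulVec {d : ℕ} {ι : Type*} [Fintype ι]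
    (M : Matrix (Fin d) (Fin d) ℝ) (w : ι → ℝ) (a : ι → Fin d → ℝ) (z : Fin d → ℝ) :
    z ⬝ᵥ (M + ∑ i, w i • vecMulVec (a i) (a i)) *ᵥ z = z ⬝ᵥ M *ᵥ z + ∑ i, w i * (a i ⬝ᵥ z) ^ 2 := by
  simp only [add_mulVec, sum_mulVec, dotProduct_add, dotProduct_sum, smul_mulVec, vecMulVec_mulVec,
    op_smul_eq_smul, dotProduct_smul, smul_eq_mul]
  congr 1
  refine Finset.sum_congr rfl fun i _ => ?_
  rw [dotProduct_comm z]
  ring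

theorem mul_sq_div_sq_le_mul_div {x c N : ℝ} (hx : 0 ≤ x) (hc : 0 ≤ c) (hcN : c ≤ N) :
    x / N ^ 2 * c ^ 2 ≤ x / N * c := by
  have hratio : c / N ≤ 1 := div_le_one_of_le₀ hcN (hc.trans hcN)
  calc x / N ^ 2 * c ^ 2 = x * (c / N) * (c / N) := by ring
    _ ≤ x * (c / N) * 1 := by gcongr; exact mul_nonneg hx (div_nonneg hc (hc.trans hcN))
    _ = x / N * c := by ring

theorem FA_subset_rescaled_ellipsoid_general
    {m n : ℕ} (A : Matrix (Fin m) (Fin n) ℝ)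
    (R : Matrix (Fin m) (Fin m) ℝ) (hR : R.PosDef)
    (ε : ℝ)
    (hFE : FA A ⊆ ell R)
    (x : Fin n → ℝ) (hx : ∀ i, 0 ≤ x i)
    (y : Fin m → ℝ)
    (hy : y = ∑ i, (x i / qnorm R⁻¹ (mcol A i)) • mcol A i)
    (hynorm : qnorm R⁻¹ y ≤ ε) :
    FA A ⊆ ell ((1 / (1 + ε)) •
      (R + ∑ i, (x i / qnorm R⁻¹ (mcol A i) ^ 2) • vecMulVec (mcol A i) (mcol A i))) := by
  rintro z ⟨hzCone, hzB⟩
  have hzR : qnorm R z ≤ 1 := hFE ⟨hzCone, hzB⟩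
  have hε : 0 ≤ ε := (Real.sqrt_nonneg _).trans hynorm
  have hcol (i : Fin n) : mcol A i ⬝ᵥ z ≤ qnorm R⁻¹ (mcol A i) :=
    (hR.dotProduct_le_qnorm_inv_mul_qnorm _ z).trans
      (mul_le_of_le_one_right (Real.sqrt_nonneg _) hzR)
  have hyz : y ⬝ᵥ z ≤ ε :=
    (hR.dotProduct_le_qnorm_inv_mul_qnorm y z).trans
      ((mul_le_of_le_one_right (Real.sqrt_nonneg _) hzR).trans hynorm)
  have hsum : ∑ i, x i / qnorm R⁻¹ (mcol A i) ^ 2 * (mcol A i ⬝ᵥ z) ^ 2 ≤ y ⬝ᵥ z := by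
    rw [hy, sum_dotProduct]
    gcongr with i
    rw [smul_dotProduct, smul_eq_mul]
    exact mul_sq_div_sq_le_mul_div (hx i) (hzCone i) (hcol i)
  rw [mem_ell_iff, smul_mulVec, dotProduct_smul, smul_eq_mul,
    dotProduct_add_sum_smul_vecMulVec_mulVec, one_div, inv_mul_le_one₀ (by positivity)]
  linarith [mem_ell_iff.1 hzR]

/-- Lemma 3.2: if `F_A ⊆ E(R)` and `y = Σᵢ xᵢ aᵢ/‖aᵢ‖_Q` (with `x ≥ 0`, `Σ xᵢ = 1`,
`Q = R⁻¹`) satisfies `‖y‖_Q ≤ ε`, then `F_A ⊆ E(R')` for the rescaled matrix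
`R' = (R + Σᵢ (xᵢ/‖aᵢ‖_Q²) aᵢaᵢᵀ)/(1+ε)`. -/
theorem FA_subset_rescaled_ellipsoid
    {m n : ℕ} (A : Matrix (Fin m) (Fin n) ℝ) (hcols : ∀ j, mcol A j ≠ 0)
    (R : Matrix (Fin m) (Fin m) ℝ) (hR : R.PosDef)
    (ε : ℝ) (hε : 0 < ε)
    (hFE : FA A ⊆ ell R)
    (x : Fin n → ℝ) (hx : ∀ i, 0 ≤ x i) (hx1 : ∑ i, x i = 1)
    (y : Fin m → ℝ)
    (hy : y = ∑ i, (x i / qnorm R⁻¹ (mcol A i)) • mcol A i)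
    (hynorm : qnorm R⁻¹ y ≤ ε) :
    FA A ⊆ ell ((1 / (1 + ε)) •
      (R + ∑ i, (x i / qnorm R⁻¹ (mcol A i) ^ 2) • vecMulVec (mcol A i) (mcol A i))) :=
  FA_subset_rescaled_ellipsoid_general A R hR ε hFE x hx y hy hynorm
end
end

section
/- Let A ∈ ℝ^{m×n} have nonzero columns a_1,…,a_n, let R ∈ ℝ^{m×m} be symmetric positive definite, Q = R⁻¹, and ε > 0. Let x ∈ ℝ^n with x ≥ 0 and Σ_{i=1}^n x_i = 1, and define R' = (1/(1+ε))·(R + Σ_{i=1}^n (x_i/‖a_i‖_Q²)·a_i a_iᵀ). Then det(R') ≥ (2/(1+ε)^m)·det(R). In particular, if ε = 1/(11m), then det(R') ≥ (16/9)·det(R). -/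
open Matrix Set MeasureTheory Pointwise ENNReal

noncomputable section

/-!
With `S = Σᵢ (xᵢ/‖aᵢ‖_Q²) aᵢaᵢᵀ` and `L = R^{1/2}`, we have `R + S = L (I + M) L` where
`M = L⁻¹ S L⁻¹` is positive semidefinite. The weights are chosen so that
`tr M = tr (R⁻¹ S) = Σᵢ xᵢ = 1`, hence `det (I + M) = ∏ (1 + λᵢ) ≥ 1 + Σ λᵢ = 2` and
`det (R + S) ≥ 2 det R`. Rescaling by `1/(1+ε)` costs a factor `(1+ε)^m`, and for `ε = 1/(11m)`
this is at most `e^{1/11} ≤ 11/10 < 9/8`.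
-/
theorem Finset.one_add_sum_le_prod_one_add {ι R : Type*} [CommSemiring R] [PartialOrder R]
    [IsOrderedRing R] (s : Finset ι) {f : ι → R} (hf : ∀ i ∈ s, 0 ≤ f i) :
    1 + ∑ i ∈ s, f i ≤ ∏ i ∈ s, (1 + f i) := by
  induction s using Finset.cons_induction with
  | empty => simp
  | cons a s _ ih =>
    rw [Finset.forall_mem_cons] at hf
    rw [Finset.sum_cons, Finset.prod_cons]
    calc 1 + (f a + ∑ i ∈ s, f i)
        ≤ (1 + f a) * (1 + ∑ i ∈ s, f i) := by
          rw [show (1 + f a) * (1 + ∑ i ∈ s, f i) = 1 + (f a + ∑ i ∈ s, f i) + f a * ∑ i ∈ s, f i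
            by ring]
          exact le_add_of_nonneg_right (mul_nonneg hf.1 (Finset.sum_nonneg hf.2))
      _ ≤ (1 + f a) * ∏ i ∈ s, (1 + f i) :=
          mul_le_mul_of_nonneg_left (ih hf.2) (add_nonneg zero_le_one hf.1)

theorem Matrix.IsHermitian.det_one_add {n : Type*} [Fintype n] [DecidableEq n]
    {A : Matrix n n ℝ} (hA : A.IsHermitian) : (1 + A).det = ∏ i, (1 + hA.eigenvalues i) := by
  conv_lhs => rw [hA.spectral_theorem, ← map_one (Unitary.conjStarAlgAut ℝ _ hA.eigenvectorUnitary),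
    ← map_add, Unitary.conjStarAlgAut_apply, det_mul, det_mul, mul_right_comm, ← det_mul,
    Unitary.mul_star_self_of_mem hA.eigenvectorUnitary.2, det_one, one_mul, ← diagonal_one,
    diagonal_add, det_diagonal]
  rfl

theorem Matrix.PosSemidef.one_add_trace_le_det_one_add {n : Type*} [Fintype n] [DecidableEq n]
    {A : Matrix n n ℝ} (hA : A.PosSemidef) : 1 + A.trace ≤ (1 + A).det := by
  rw [hA.1.det_one_add, hA.1.trace_eq_sum_eigenvalues]
  exact Finset.one_add_sum_le_prod_one_add _ fun i _ => hA.eigenvalues_nonneg i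

open scoped MatrixOrder in
theorem Matrix.PosDef.det_mul_one_add_trace_le_det_add {n : Type*} [Fintype n] [DecidableEq n]
    {R S : Matrix n n ℝ} (hR : R.PosDef) (hS : S.PosSemidef) :
    R.det * (1 + (R⁻¹ * S).trace) ≤ (R + S).det := by
  set L := CFC.sqrt R
  have hLL : L * L = R := CFC.sqrt_mul_sqrt_self R hR.posSemidef.nonneg
  have hL : IsUnit L.det := by
    rw [isUnit_iff_ne_zero, ← mul_self_ne_zero, ← det_mul, hLL]
    exact hR.det_pos.ne'
  set M := L⁻¹ * S * L⁻¹
  have hM : M.PosSemidef := by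
    have hLinv : (L⁻¹)ᴴ = L⁻¹ := by
      rw [conjTranspose_nonsing_inv, (CFC.sqrt_nonneg R).posSemidef.1.eq]
    simpa only [hLinv] using hS.mul_mul_conjTranspose_same L⁻¹
  have hLML : L * M * L = S := by
    simp only [M, ← Matrix.mul_assoc, mul_nonsing_inv _ hL, Matrix.one_mul]
    rw [Matrix.mul_assoc, nonsing_inv_mul _ hL, Matrix.mul_one]
  have hRS : R + S = L * (1 + M) * L := by
    rw [Matrix.mul_add, Matrix.add_mul, Matrix.mul_one, hLL, hLML]
  have htr : M.trace = (R⁻¹ * S).trace := by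
    rw [trace_mul_cycle, ← hLL, Matrix.mul_inv_rev]
  calc R.det * (1 + (R⁻¹ * S).trace) ≤ R.det * (1 + M).det := by
        rw [← htr]
        exact mul_le_mul_of_nonneg_left hM.one_add_trace_le_det_one_add hR.det_pos.le
    _ = (R + S).det := by
        rw [hRS, det_mul, det_mul, ← hLL, det_mul]
        ring

theorem qnorm_sq_of_posSemidef {d : ℕ} {M : Matrix (Fin d) (Fin d) ℝ} (hM : M.PosSemidef)
    (v : Fin d → ℝ) : qnorm M v ^ 2 = v ⬝ᵥ M *ᵥ v :=
  Real.sq_sqrt (star_trivial v ▸ hM.dotProduct_mulVec_nonneg v)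

theorem trace_mul_sum_smul_vecMulVec_div_qnorm_sq {d : ℕ} {ι : Type*} [Fintype ι]
    {Q : Matrix (Fin d) (Fin d) ℝ} (hQ : Q.PosDef) {a : ι → Fin d → ℝ} (ha : ∀ i, a i ≠ 0)
    (x : ι → ℝ) :
    (Q * ∑ i, (x i / qnorm Q (a i) ^ 2) • vecMulVec (a i) (a i)).trace = ∑ i, x i := by
  simp only [Matrix.mul_sum, Matrix.mul_smul, trace_sum, trace_smul, mul_vecMulVec,
    trace_vecMulVec, qnorm_sq_of_posSemidef hQ.posSemidef, smul_eq_mul]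
  refine Finset.sum_congr rfl fun i _ => ?_
  have hpos : 0 < a i ⬝ᵥ Q *ᵥ a i := by simpa using hQ.dotProduct_mulVec_pos (ha i)
  rw [dotProduct_comm (Q *ᵥ a i), div_mul_cancel₀ _ hpos.ne']

theorem posSemidef_sum_smul_vecMulVec_self {n ι : Type*} [Fintype n] [Fintype ι]
    {c : ι → ℝ} (hc : ∀ i, 0 ≤ c i) (a : ι → n → ℝ) :
    (∑ i, c i • vecMulVec (a i) (a i)).PosSemidef :=
  posSemidef_sum _ fun i _ => (posSemidef_vecMulVec_self_star (a i)).smul (hc i)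

theorem one_add_one_div_eleven_mul_pow_le (m : ℕ) : (1 + 1 / (11 * (m : ℝ))) ^ m ≤ 9 / 8 := by
  have hexp : (1 + 1 / (11 * (m : ℝ))) ^ m ≤ Real.exp (1 / 11) := by
    convert Real.one_sub_div_pow_le_exp_neg (n := m) (t := -(1 / 11))
      (by linarith [m.cast_nonneg (α := ℝ)]) using 2
    · ring
    · ring
  have := Real.exp_bound_div_one_sub_of_interval (x := 1 / 11) (by norm_num) (by norm_num)
  linarith [show (1 : ℝ) / (1 - 1 / 11) ≤ 9 / 8 by norm_num]

/-- Lemma 3.3: for the rescaled matrix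
`R' = (R + Σᵢ (xᵢ/‖aᵢ‖_Q²) aᵢaᵢᵀ)/(1+ε)` (with `Q = R⁻¹`, `x ≥ 0`, `Σ xᵢ = 1`),
`det(R') ≥ (2/(1+ε)^m) det(R)`; in particular, if `ε = 1/(11m)`,
then `det(R') ≥ (16/9) det(R)`. -/
theorem det_rescaled_ge
    {m n : ℕ} (A : Matrix (Fin m) (Fin n) ℝ) (hcols : ∀ j, mcol A j ≠ 0)
    (R : Matrix (Fin m) (Fin m) ℝ) (hR : R.PosDef)
    (ε : ℝ) (hε : 0 < ε)
    (x : Fin n → ℝ) (hx : ∀ i, 0 ≤ x i) (hx1 : ∑ i, x i = 1)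
    (R' : Matrix (Fin m) (Fin m) ℝ)
    (hR' : R' = (1 / (1 + ε)) •
      (R + ∑ i, (x i / qnorm R⁻¹ (mcol A i) ^ 2) • vecMulVec (mcol A i) (mcol A i))) :
    2 / (1 + ε) ^ m * R.det ≤ R'.det ∧
      (ε = 1 / (11 * (m : ℝ)) → 16 / 9 * R.det ≤ R'.det) := by
  set S := ∑ i, (x i / qnorm R⁻¹ (mcol A i) ^ 2) • vecMulVec (mcol A i) (mcol A i)
  have hS : S.PosSemidef :=
    posSemidef_sum_smul_vecMulVec_self (fun i => div_nonneg (hx i) (sq_nonneg _)) _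
  have htr : (R⁻¹ * S).trace = 1 := by
    rw [trace_mul_sum_smul_vecMulVec_div_qnorm_sq hR.inv hcols, hx1]
  have hdet : 2 * R.det ≤ (R + S).det := by
    simpa [htr, mul_comm, one_add_one_eq_two] using hR.det_mul_one_add_trace_le_det_add hS
  have hscaled : 2 / (1 + ε) ^ m * R.det ≤ R'.det := by
    rw [hR', det_smul, Fintype.card_fin, div_pow, one_pow, one_div_mul_eq_div, div_mul_eq_mul_div]
    gcongr
  refine ⟨hscaled, fun hεm => le_trans ?_ hscaled⟩
  have hpow : (1 + ε) ^ m ≤ 9 / 8 := hεm ▸ one_add_one_div_eleven_mul_pow_le m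
  have h169 : (16 / 9 : ℝ) ≤ 2 / (1 + ε) ^ m := by
    rw [le_div_iff₀ (by positivity)]
    linarith
  exact mul_le_mul_of_nonneg_right h169 hR.det_pos.le
end
end

section
/- Let R ∈ ℝ^{d×d} be symmetric positive definite, let a ∈ ℝ^d with ‖a‖ = 1, and let W ∈ ℝ^{d×(d−1)} be any matrix whose columns form an orthonormal basis of the hyperplane H = {x ∈ ℝ^d : aᵀx = 0}. Then det(WᵀRW) = det(R)·(aᵀR⁻¹a). -/
/-! Completing `W` by the column `a` gives an orthogonal matrix `M = [W | a]`, so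
`N = Mᵀ R M` has `det N = det R` and `N⁻¹ = Mᵀ R⁻¹ M`. The leading block of `N` is `Wᵀ R W`,
so `det (Wᵀ R W)` is the cofactor of `N` at its last diagonal entry, that is
`det N · (N⁻¹)_{dd} = det R · aᵀ R⁻¹ a`. -/

open Matrix Set MeasureTheory Pointwise ENNReal

noncomputable section

namespace Matrix

variable {m n α : Type*} [CommRing α]

section Blocks

variable [Fintype m]

theorem transpose_fromCols_mul_mul_fromCols {n₁ n₂ : Type*} (W₁ : Matrix m n₁ α)
    (W₂ : Matrix m n₂ α) (A : Matrix m m α) :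
    (fromCols W₁ W₂)ᵀ * A * fromCols W₁ W₂ =
      fromBlocks (W₁ᵀ * A * W₁) (W₁ᵀ * A * W₂) (W₂ᵀ * A * W₁) (W₂ᵀ * A * W₂) := by
  rw [transpose_fromCols, Matrix.mul_assoc, mul_fromCols, fromRows_mul_fromCols]
  simp only [Matrix.mul_assoc]

theorem transpose_mul_self_fromCols_replicateCol [DecidableEq n] {W : Matrix m n α} {a : m → α}
    (hW : Wᵀ * W = 1) (hWa : a ᵥ* W = 0) (ha : a ⬝ᵥ a = 1) :
    (fromCols W (replicateCol Unit a))ᵀ * fromCols W (replicateCol Unit a) = 1 := by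
  rw [transpose_fromCols, fromRows_mul_fromCols, hW, ← fromBlocks_one]
  congr 1
  · rw [← replicateCol_mulVec, mulVec_transpose, hWa, replicateCol_zero]
  · rw [transpose_replicateCol, ← replicateRow_vecMul, hWa, replicateRow_zero]
  · ext; simp [ha]

end Blocks

variable [Fintype n] [DecidableEq n]

theorem adjugate_apply_eq_det_mul_inv_apply {A : Matrix n n α} (hA : IsUnit A.det) (i j : n) :
    A.adjugate i j = A.det * A⁻¹ i j := by
  rw [inv_def, smul_apply, smul_eq_mul, ← mul_assoc, Ring.mul_inverse_cancel _ hA, one_mul]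

theorem adjugate_fromBlocks_apply_inr_inr (A : Matrix n n α) (B : Matrix n Unit α)
    (C : Matrix Unit n α) (D : Matrix Unit Unit α) :
    (fromBlocks A B C D).adjugate (.inr ()) (.inr ()) = A.det := by
  have hrow : (fromBlocks A B C D).updateRow (.inr ()) (Pi.single (.inr ()) 1) =
      fromBlocks A B 0 1 := by
    ext (i | i) (j | j) <;> simp [updateRow_apply]
  rw [adjugate_apply, hrow, det_fromBlocks_zero₂₁, det_one, mul_one]

variable [Fintype m] [DecidableEq m]

theorem det_transpose_mul_mul_eq_sq_mul (e : m ≃ n) (M : Matrix m n α) (A : Matrix m m α) :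
    (Mᵀ * A * M).det = (M.submatrix id e).det ^ 2 * A.det := by
  rw [← det_submatrix_equiv_self e, submatrix_mul _ _ _ id _ Function.bijective_id,
    submatrix_mul _ _ _ id _ Function.bijective_id, submatrix_id_id, ← transpose_submatrix,
    det_mul, det_mul, det_transpose]
  ring

theorem det_transpose_mul_mul_of_transpose_mul_self (e : m ≃ n) {M : Matrix m n α}
    (hM : Mᵀ * M = 1) (A : Matrix m m α) : (Mᵀ * A * M).det = A.det := by
  have hsq := det_transpose_mul_mul_eq_sq_mul e M 1
  rw [Matrix.mul_one, hM, det_one, det_one, mul_one] at hsq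
  rw [det_transpose_mul_mul_eq_sq_mul e, ← hsq, one_mul]

theorem inv_transpose_mul_mul_of_transpose_mul_self (e : m ≃ n) {M : Matrix m n α}
    (hM : Mᵀ * M = 1) {A : Matrix m m α} (hA : IsUnit A.det) :
    (Mᵀ * A * M)⁻¹ = Mᵀ * A⁻¹ * M := by
  have hM' : M * Mᵀ = 1 := (mul_eq_one_comm_of_equiv e.symm).mp hM
  refine inv_eq_right_inv ?_
  calc Mᵀ * A * M * (Mᵀ * A⁻¹ * M) = Mᵀ * (A * (M * Mᵀ) * A⁻¹) * M := by
        simp only [Matrix.mul_assoc]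
    _ = 1 := by rw [hM', Matrix.mul_one, mul_nonsing_inv A hA, Matrix.mul_one, hM]

end Matrix

/-- Lemma 4.1: for a symmetric positive definite `R`, a unit vector `a`, and a matrix `W`
whose columns form an orthonormal basis of the hyperplane `H = {x : aᵀx = 0}`,
one has `det(Wᵀ R W) = det(R) · (aᵀ R⁻¹ a)`. -/
theorem det_projected_eq
    {d : ℕ} (R : Matrix (Fin d) (Fin d) ℝ) (hR : R.PosDef)
    (a : Fin d → ℝ) (ha : norm2 a = 1)
    (W : Matrix (Fin d) (Fin (d - 1)) ℝ)
    (hWo : Wᵀ * W = 1)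
    (hWH : ∀ x : Fin d → ℝ, (∃ c : Fin (d - 1) → ℝ, W.mulVec c = x) ↔ dotp a x = 0) :
    (Wᵀ * R * W).det = R.det * dotp a (R⁻¹.mulVec a) := by
  have haa : a ⬝ᵥ a = 1 := by
    rw [norm2, Real.sqrt_eq_one] at ha
    simpa [dotProduct, sq] using ha
  have hWa : a ᵥ* W = 0 := by
    ext j
    simpa [dotp, vecMul, dotProduct] using (hWH _).mp ⟨Pi.single j 1, rfl⟩
  have hd : 0 < d := Nat.pos_of_ne_zero fun hd ↦ by subst hd; simp at haa
  let e : Fin d ≃ Fin (d - 1) ⊕ Unit := Fintype.equivOfCardEq (by simp; omega)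
  set M := fromCols W (replicateCol Unit a)
  have hM : Mᵀ * M = 1 := transpose_mul_self_fromCols_replicateCol hWo hWa haa
  have hRdet : IsUnit R.det := hR.isUnit.map detMonoidHom
  have hdet : (Mᵀ * R * M).det = R.det := det_transpose_mul_mul_of_transpose_mul_self e hM R
  calc (Wᵀ * R * W).det = (Mᵀ * R * M).adjugate (.inr ()) (.inr ()) := by
        rw [transpose_fromCols_mul_mul_fromCols, adjugate_fromBlocks_apply_inr_inr]
    _ = R.det * (Mᵀ * R⁻¹ * M) (.inr ()) (.inr ()) := by
        rw [adjugate_apply_eq_det_mul_inv_apply (hdet ▸ hRdet), hdet,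
          inv_transpose_mul_mul_of_transpose_mul_self e hM hRdet]
    _ = R.det * dotp a (R⁻¹.mulVec a) := by
        rw [transpose_fromCols_mul_mul_fromCols, fromBlocks_apply₂₂, transpose_replicateCol,
          Matrix.mul_assoc, ← replicateCol_mulVec, replicateRow_mul_replicateCol_apply]
        rfl
end
end

section
/- Let A ∈ ℝ^{m×n} have columns a_1,…,a_n, let R ∈ ℝ^{m×m} be symmetric positive definite with F_A ⊆ E(R), and let Q = R⁻¹. If k ∈ [n] satisfies ‖â_k‖_Q < ω_A, then k ∉ T*_A, i.e. a_kᵀy = 0 for every y with Aᵀy ≥ 0. -/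
open Matrix Set MeasureTheory Pointwise ENNReal

noncomputable section

/-! For `z ∈ F_A ⊆ E(R)`, Cauchy–Schwarz for the inner product of `Q = R⁻¹`, applied to `a` and
`R z`, gives `aᵀz ≤ ‖a‖_Q ‖z‖_R ≤ ‖a‖_Q`. Hence `width_{F_A}(â_k) ≤ ‖â_k‖_Q < ω_A`, while every
index of `T*_A` has width at least `ω_A`. -/

theorem Matrix.PosSemidef.dotProduct_mulVec_le {ι : Type*} [Fintype ι] {M : Matrix ι ι ℝ}
    (hM : M.PosSemidef) (u v : ι → ℝ) :
    u ⬝ᵥ (M *ᵥ v) ≤ √(u ⬝ᵥ (M *ᵥ u)) * √(v ⬝ᵥ (M *ᵥ v)) := by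
  let _ := M.toSeminormedAddCommGroup hM
  let _ := M.toInnerProductSpace hM
  have inner_eq : ∀ x y : ι → ℝ, (inner ℝ x y : ℝ) = x ⬝ᵥ (M *ᵥ y) := fun x y => by
    change (M *ᵥ y) ⬝ᵥ star x = _
    rw [star_trivial, dotProduct_comm]
  simpa only [norm_eq_sqrt_real_inner, inner_eq] using real_inner_le_norm u v

theorem dotp_le_qnorm_inv_mul_qnorm {d : ℕ} {M : Matrix (Fin d) (Fin d) ℝ} (hM : M.PosDef)
    (a z : Fin d → ℝ) : dotp a z ≤ qnorm M⁻¹ a * qnorm M z := by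
  have hMinvM : M⁻¹ *ᵥ (M *ᵥ z) = z := by
    rw [mulVec_mulVec, nonsing_inv_mul M hM.det_pos.ne'.isUnit, one_mulVec]
  have := hM.inv.posSemidef.dotProduct_mulVec_le a (M *ᵥ z)
  rwa [hMinvM, dotProduct_comm (M *ᵥ z)] at this

theorem widthOf_le_qnorm_inv {d : ℕ} {M : Matrix (Fin d) (Fin d) ℝ} (hM : M.PosDef)
    {X : Set (Fin d → ℝ)} (hX : X ⊆ ell M) (a : Fin d → ℝ) :
    widthOf X a ≤ qnorm M⁻¹ a := by
  refine Real.sSup_le ?_ (Real.sqrt_nonneg _)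
  rintro r ⟨z, hz, rfl⟩
  calc dotp a z ≤ qnorm M⁻¹ a * qnorm M z := dotp_le_qnorm_inv_mul_qnorm hM a z
    _ ≤ qnorm M⁻¹ a := mul_le_of_le_one_right (Real.sqrt_nonneg _) (hX hz)

/-- The case of an unbounded `X` relies on the junk value `sSup = 0`. -/
theorem widthOf_nonneg {d : ℕ} {X : Set (Fin d → ℝ)} (hX : 0 ∈ X) (a : Fin d → ℝ) :
    0 ≤ widthOf X a := by
  by_cases hbdd : BddAbove { r : ℝ | ∃ z ∈ X, r = dotp a z }
  · exact le_csSup hbdd ⟨0, hX, by simp [dotp]⟩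
  · exact (Real.sSup_of_not_bddAbove hbdd).ge

theorem zero_mem_FA {d : ℕ} {ι : Type} (A : Matrix (Fin d) ι ℝ) : (0 : Fin d → ℝ) ∈ FA A :=
  ⟨fun j => by simp [dotp], by simp [norm2]⟩

theorem omegaA_le_widthOf {d : ℕ} {ι : Type} (A : Matrix (Fin d) ι ℝ) {i : ι}
    (hi : i ∈ TstarA A) : omegaA A ≤ widthOf (FA A) (nml (mcol A i)) := by
  refine csInf_le ⟨0, ?_⟩ ⟨i, hi, rfl⟩
  rintro r ⟨j, -, rfl⟩
  exact widthOf_nonneg (zero_mem_FA A) _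

theorem not_mem_TstarA_iff {d : ℕ} {ι : Type} (A : Matrix (Fin d) ι ℝ) (k : ι) :
    k ∉ TstarA A ↔ ∀ y : Fin d → ℝ, (∀ j, 0 ≤ dotp (mcol A j) y) → dotp (mcol A k) y = 0 := by
  simp only [TstarA, mem_ofPred_eq, not_exists, not_and, not_lt]
  exact forall_congr' fun y => forall_congr' fun hy => ⟨(hy k).antisymm', fun h => h.le⟩

/-- Lemma 4.6: if `F_A ⊆ E(R)` with `R` symmetric positive definite, `Q = R⁻¹`, and
`‖â_k‖_Q < ω_A`, then `k ∉ T*_A`, i.e. `a_kᵀ y = 0` for every `y` with `Aᵀ y ≥ 0`. -/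
theorem not_mem_Tstar_of_small_qnorm
    {m n : ℕ} (A : Matrix (Fin m) (Fin n) ℝ)
    (R : Matrix (Fin m) (Fin m) ℝ) (hR : R.PosDef)
    (hFE : FA A ⊆ ell R)
    (k : Fin n) (hk : qnorm R⁻¹ (nml (mcol A k)) < omegaA A) :
    k ∉ TstarA A ∧
      ∀ y : Fin m → ℝ, (∀ j, 0 ≤ dotp (mcol A j) y) → dotp (mcol A k) y = 0 := by
  have hkT : k ∉ TstarA A := fun hmem =>
    (omegaA_le_widthOf A hmem).trans (widthOf_le_qnorm_inv hR hFE _) |>.not_gt hk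
  exact ⟨hkT, (not_mem_TstarA_iff A k).1 hkT⟩
end
end

section
/- Let a_1,…,a_n ∈ ℝ^m be nonzero vectors and suppose R ∈ ℝ^{m×m} can be written as R = αI_m + Σ_{i=1}^n γ_i·â_iâ_iᵀ with 0 < α ≤ 1 and γ_i ≥ 0 for all i, and suppose det(R) > 1. Let Q = R⁻¹. Then there exists k ∈ [n] such that ‖â_k‖_Q ≤ (det(R)^{1/m} − 1)^{−1/2}. -/
/-!
Write `uᵢ = âᵢ`, `Q = R⁻¹` and `t = det(R)^{1/m}`. AM–GM on the eigenvalues of `R` gives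
`m t ≤ tr R = α m + Σ γᵢ ‖uᵢ‖² ≤ m + Σ γᵢ`, so the total weight `Σ γᵢ` is at least `m (t - 1)`.
On the other hand `m = tr (Q R) = α tr Q + Σ γᵢ ‖uᵢ‖²_Q` with `tr Q ≥ 0`, so the
`γ`-weighted mean of the `‖uᵢ‖²_Q` is at most `m / Σ γᵢ ≤ 1 / (t - 1)`, and so is their minimum.
-/

open Matrix Set MeasureTheory Pointwise ENNReal

noncomputable section

namespace Matrix

variable {ι n : Type*} [Fintype ι] [Fintype n]

theorem trace_mul_vecMulVec_self (Q : Matrix n n ℝ) (u : n → ℝ) :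
    (Q * vecMulVec u u).trace = u ⬝ᵥ Q *ᵥ u := by
  rw [mul_vecMulVec, trace_vecMulVec, dotProduct_comm]

variable [DecidableEq n]

theorem PosSemidef.card_mul_det_rpow_le_trace {A : Matrix n n ℝ} (hA : A.PosSemidef) :
    Fintype.card n * A.det ^ ((1 : ℝ) / Fintype.card n) ≤ A.trace := by
  rcases isEmpty_or_nonempty n with _ | _
  · simp
  have hcard : (0 : ℝ) < Fintype.card n := by exact_mod_cast Fintype.card_pos
  have amgm := Real.geom_mean_le_arith_mean Finset.univ (fun _ ↦ 1) hA.1.eigenvalues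
    (fun _ _ ↦ zero_le_one) (by simpa using hcard) (fun i _ ↦ hA.eigenvalues_nonneg i)
  simp only [Real.rpow_one, one_mul, Finset.sum_const, Finset.card_univ, nsmul_eq_mul,
    mul_one] at amgm
  rw [hA.1.det_eq_prod_eigenvalues, hA.1.trace_eq_sum_eigenvalues]
  simp only [RCLike.ofReal_real_eq_id, id_eq, one_div]
  rw [le_div_iff₀ hcard] at amgm
  linarith

variable {α : ℝ} {γ : ι → ℝ} {u : ι → n → ℝ}

theorem posDef_smul_one_add_sum_smul_vecMulVec (hα : 0 < α) (hγ : ∀ i, 0 ≤ γ i) :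
    (α • (1 : Matrix n n ℝ) + ∑ i, γ i • vecMulVec (u i) (u i)).PosDef := by
  refine (PosDef.one.smul hα).add_posSemidef <| posSemidef_sum _ fun i _ ↦ ?_
  simpa using (posSemidef_vecMulVec_self_star (u i)).smul (hγ i)

theorem trace_smul_one_add_sum_smul_vecMulVec :
    (α • (1 : Matrix n n ℝ) + ∑ i, γ i • vecMulVec (u i) (u i)).trace =
      α * Fintype.card n + ∑ i, γ i * (u i ⬝ᵥ u i) := by
  simp

theorem trace_mul_smul_one_add_sum_smul_vecMulVec (Q : Matrix n n ℝ) :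
    (Q * (α • (1 : Matrix n n ℝ) + ∑ i, γ i • vecMulVec (u i) (u i))).trace =
      α * Q.trace + ∑ i, γ i * (u i ⬝ᵥ Q *ᵥ u i) := by
  simp [Matrix.mul_add, Finset.mul_sum, trace_sum, trace_mul_vecMulVec_self]

theorem exists_dotProduct_inv_mulVec_le_of_one_lt_det (hα0 : 0 < α) (hα1 : α ≤ 1)
    (hγ : ∀ i, 0 ≤ γ i) (hu : ∀ i, u i ⬝ᵥ u i ≤ 1) {R : Matrix n n ℝ}
    (hR : R = α • 1 + ∑ i, γ i • vecMulVec (u i) (u i)) (hdet : 1 < R.det) :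
    ∃ k, u k ⬝ᵥ R⁻¹ *ᵥ u k ≤ 1 / (R.det ^ ((1 : ℝ) / Fintype.card n) - 1) := by
  set N : ℝ := (Fintype.card n : ℝ)
  set t := R.det ^ ((1 : ℝ) / N)
  set q := fun i ↦ u i ⬝ᵥ R⁻¹ *ᵥ u i
  have hRpos : R.PosDef := hR ▸ posDef_smul_one_add_sum_smul_vecMulVec hα0 hγ
  have hN : 0 < N := by
    have : Nonempty n := by
      by_contra h
      simp [not_nonempty_iff.mp h] at hdet
    exact Nat.cast_pos.mpr Fintype.card_pos
  have ht : 1 < t := Real.one_lt_rpow hdet (by positivity)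
  have hγ_sum : N * (t - 1) ≤ ∑ i, γ i := by
    have hamgm : N * t ≤ R.trace := hRpos.posSemidef.card_mul_det_rpow_le_trace
    rw [hR, trace_smul_one_add_sum_smul_vecMulVec] at hamgm
    have := Finset.sum_le_sum fun i (_ : i ∈ Finset.univ) ↦ mul_le_of_le_one_right (hγ i) (hu i)
    nlinarith
  have hq_sum : ∑ i, γ i * q i ≤ N := by
    have htr : (R⁻¹ * R).trace = N := by
      rw [nonsing_inv_mul R (isUnit_iff_ne_zero.mpr hRpos.det_pos.ne'), trace_one]
    rw [hR, trace_mul_smul_one_add_sum_smul_vecMulVec, ← hR] at htr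
    nlinarith [hRpos.inv.posSemidef.trace_nonneg]
  have hγ_pos : 0 < ∑ i, γ i := lt_of_lt_of_le (by nlinarith) hγ_sum
  obtain ⟨k, -, hk⟩ := Finset.exists_min_image Finset.univ q
    (Finset.univ_nonempty_iff.mpr (Finset.nonempty_of_sum_ne_zero hγ_pos.ne').nonempty)
  refine ⟨k, (le_div_iff₀ (by linarith)).mpr ?_⟩
  have : (∑ i, γ i) * q k ≤ ∑ i, γ i * q i := by
    rw [Finset.sum_mul]
    exact Finset.sum_le_sum fun i hi ↦ mul_le_mul_of_nonneg_left (hk i hi) (hγ i)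
  nlinarith

end Matrix

theorem dotProduct_nml_self_le_one {d : ℕ} (v : Fin d → ℝ) : nml v ⬝ᵥ nml v ≤ 1 := by
  have hnorm : norm2 v * norm2 v = v ⬝ᵥ v := by
    simpa [norm2, dotProduct, sq] using
      Real.mul_self_sqrt (Finset.sum_nonneg fun i _ ↦ sq_nonneg (v i))
  rw [nml, dotProduct_smul, smul_dotProduct, smul_eq_mul, smul_eq_mul, ← mul_assoc, ← mul_inv,
    hnorm]
  exact inv_mul_le_one

theorem exists_small_qnorm_col_general
    {m n : ℕ} (a : Fin n → Fin m → ℝ)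
    (α : ℝ) (hα0 : 0 < α) (hα1 : α ≤ 1)
    (γ : Fin n → ℝ) (hγ : ∀ i, 0 ≤ γ i)
    (R : Matrix (Fin m) (Fin m) ℝ)
    (hR : R = α • (1 : Matrix (Fin m) (Fin m) ℝ) +
      ∑ i, γ i • vecMulVec (nml (a i)) (nml (a i)))
    (hdet : 1 < R.det) :
    ∃ k : Fin n, qnorm R⁻¹ (nml (a k)) ≤ 1 / Real.sqrt (R.det ^ ((1 : ℝ) / m) - 1) := by
  obtain ⟨k, hk⟩ := exists_dotProduct_inv_mulVec_le_of_one_lt_det hα0 hα1 hγ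
    (fun i ↦ dotProduct_nml_self_le_one (a i)) hR hdet
  rw [Fintype.card_fin] at hk
  exact ⟨k, (Real.sqrt_le_sqrt hk).trans_eq (by rw [Real.sqrt_div zero_le_one, Real.sqrt_one])⟩

/-- Lemma 4.8: if `R = α I + Σᵢ γᵢ âᵢâᵢᵀ` with `0 < α ≤ 1`, `γ ≥ 0`, and `det(R) > 1`,
then some column satisfies `‖â_k‖_Q ≤ (det(R)^{1/m} − 1)^{−1/2}`, where `Q = R⁻¹`. -/
theorem exists_small_qnorm_col
    {m n : ℕ} (a : Fin n → Fin m → ℝ) (ha : ∀ i, a i ≠ 0)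
    (α : ℝ) (hα0 : 0 < α) (hα1 : α ≤ 1)
    (γ : Fin n → ℝ) (hγ : ∀ i, 0 ≤ γ i)
    (R : Matrix (Fin m) (Fin m) ℝ)
    (hR : R = α • (1 : Matrix (Fin m) (Fin m) ℝ) +
      ∑ i, γ i • vecMulVec (nml (a i)) (nml (a i)))
    (hdet : 1 < R.det) :
    ∃ k : Fin n, qnorm R⁻¹ (nml (a k)) ≤ 1 / Real.sqrt (R.det ^ ((1 : ℝ) / m) - 1) :=
  exists_small_qnorm_col_general a α hα0 hα1 γ hγ R hR hdet
end
end

section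
/- Let A ∈ ℝ^{m×n}, let H ⊆ ℝ^m be an r-dimensional linear subspace such that Σ_A ⊆ H, let U ∈ ℝ^{m×r} be a matrix whose columns form an orthonormal basis of H, and let A' = UᵀA ∈ ℝ^{r×n}. Then F_A = U·F_{A'} = {Uz : z ∈ F_{A'}}. -/
open Matrix Set MeasureTheory Pointwise ENNReal

noncomputable section

lemma dotp_col_mul {m n r : ℕ} (U : Matrix (Fin m) (Fin r) ℝ)
    (A : Matrix (Fin m) (Fin n) ℝ) (j : Fin n) (z : Fin r → ℝ) :
    dotp (mcol (Uᵀ * A) j) z = dotp (mcol A j) (U.mulVec z) := by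
  simp only [dotp, mcol, Matrix.mul_apply, Matrix.transpose_apply, Matrix.mulVec,
    dotProduct]
  simp only [Finset.sum_mul, Finset.mul_sum]
  rw [Finset.sum_comm]
  congr 1; ext k; congr 1; ext i; ring

lemma norm2_mulVec {m r : ℕ} (U : Matrix (Fin m) (Fin r) ℝ) (hUo : Uᵀ * U = 1)
    (z : Fin r → ℝ) : norm2 (U.mulVec z) = norm2 z := by
  unfold norm2
  congr 1
  have h : ∀ i i' : Fin r, (∑ k, U k i * U k i') = if i = i' then 1 else 0 := by
    intro i i'
    have := congrFun (congrFun hUo i) i'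
    simpa [Matrix.mul_apply, Matrix.transpose_apply, Matrix.one_apply] using this
  calc ∑ k, (U.mulVec z) k ^ 2
      = ∑ k, ∑ i, ∑ i', (U k i * U k i') * (z i * z i') := by
        congr 1; ext k
        simp only [Matrix.mulVec, dotProduct, sq, Finset.sum_mul_sum]
        congr 1; ext i; congr 1; ext i'; ring
    _ = ∑ i, ∑ i', (∑ k, U k i * U k i') * (z i * z i') := by
        rw [Finset.sum_comm]; congr 1; ext i; rw [Finset.sum_comm]
        congr 1; ext i'; rw [Finset.sum_mul]
    _ = ∑ i, z i ^ 2 := by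
        simp only [h]
        rw [Finset.sum_congr rfl]
        intro i _
        rw [Finset.sum_eq_single i]
        · simp [sq]
        · intro i' _ hne
          simp only [if_neg (fun (h : i = i') => hne h.symm), zero_mul]
        · intro h; exact absurd (Finset.mem_univ i) h

/-- Lemma 4.9(i): if `H` is an `r`-dimensional subspace with `Σ_A ⊆ H` and the columns
of `U` form an orthonormal basis of `H`, then for `A' = UᵀA` one has
`F_A = U·F_{A'} = {Uz : z ∈ F_{A'}}`. -/
theorem FA_eq_image_FA'

    {m n r : ℕ} (A : Matrix (Fin m) (Fin n) ℝ)
    (H : Submodule ℝ (Fin m → ℝ)) (hHr : Module.finrank ℝ H = r)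
    (hSigH : SigmaCone A ⊆ (H : Set (Fin m → ℝ)))
    (U : Matrix (Fin m) (Fin r) ℝ) (hUo : Uᵀ * U = 1)
    (hUH : ∀ x : Fin m → ℝ, (∃ c : Fin r → ℝ, U.mulVec c = x) ↔ x ∈ H) :
    FA A = (fun z => U.mulVec z) '' FA (Uᵀ * A) := by
  ext y
  constructor
  · rintro ⟨hy1, hy2⟩
    obtain ⟨z, hz⟩ := (hUH y).2 (hSigH hy1)
    refine ⟨z, ⟨?_, ?_⟩, hz⟩
    · intro j
      rw [dotp_col_mul, hz]
      exact hy1 j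
    · show norm2 z ≤ 1
      rw [← norm2_mulVec U hUo, hz]
      exact hy2
  · rintro ⟨z, ⟨hz1, hz2⟩, rfl⟩
    refine ⟨fun j => ?_, ?_⟩
    · rw [← dotp_col_mul]
      exact hz1 j
    · show norm2 (U.mulVec z) ≤ 1
      rw [norm2_mulVec U hUo]
      exact hz2
end
end
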